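/- Let A ⊆ ℝⁿ be an H-polyhedron with nonempty interior and let A = ⋂_{i=1}^t Cᵢ be an irredundant decomposition into closed half-spaces, with Hᵢ = ∂Cᵢ the bounding hyperplane of Cᵢ. Then each facet Hᵢ ∩ A has nonempty interior in Hᵢ, the boundary of A satisfies ∂A = ⋃_{i=1}^t (Hᵢ ∩ A), and this union is irredundant: Hᵢ ∩ A is not contained in Hⱼ ∩ A for any i ≠ j. -/

import Mathlib

open RealInnerProductSpace

/-- A closed half-space in `ℝⁿ`: `{x | ⟪a, x⟫ ≤ b}` with `a ≠ 0`. -/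
def IsClosedHalfSpace {n : ℕ} (C : Set (EuclideanSpace ℝ (Fin n))) : Prop :=
  ∃ (a : EuclideanSpace ℝ (Fin n)) (b : ℝ), a ≠ 0 ∧
    C = {x : EuclideanSpace ℝ (Fin n) | ⟪a, x⟫ ≤ b}

/-!
Irredundancy means that for each `j` some point `y` lies in every `Cₖ` with `k ≠ j` but not in
`Cⱼ`. Moving from an interior point `x₀` of `A` towards `y` one first hits `Hⱼ` at a point `z`
lying strictly inside all other half-spaces, so near `z` the hyperplane `Hⱼ` is contained in `A`.
If the facet of `Cᵢ` were contained in that of `Cⱼ`, then near such a point `Hᵢ` would lie in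
`Hⱼ`, forcing `(aⱼ, bⱼ) = c • (aᵢ, bᵢ)` with `c > 0` (because of `x₀`), i.e. `Cⱼ = Cᵢ`. The
description of `∂A` holds for any finite intersection of closed sets, as the interior of a finite
intersection is the intersection of the interiors.
-/

open Filter Topology

theorem Fin.exists_forall_ne_mem_notMem_of_not_exists_iInter_eq {α : Type*} {P : Set α → Prop}
    {t : ℕ} {C : Fin t → Set α} (hC : ∀ i, P (C i))
    (hmin : ¬ ∃ m : ℕ, m < t ∧ ∃ D : Fin m → Set α, (∀ i, P (D i)) ∧ ⋂ i, C i = ⋂ i, D i)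
    (j : Fin t) : ∃ y, (∀ k ≠ j, y ∈ C k) ∧ y ∉ C j := by
  by_contra! hred
  cases t with
  | zero => exact j.elim0
  | succ m =>
    refine hmin ⟨m, m.lt_succ_self, fun k => C (j.succAbove k), fun k => hC _, ?_⟩
    refine (Set.iInter_mono' fun k => ⟨j.succAbove k, subset_rfl⟩).antisymm fun x hx => ?_
    have hne : ∀ k ≠ j, x ∈ C k := fun k hk => by
      obtain ⟨l, rfl⟩ := Fin.exists_succAbove_eq hk
      exact Set.mem_iInter.1 hx l
    refine Set.mem_iInter.2 fun k => ?_
    rcases eq_or_ne k j with rfl | hk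
    · exact hred x hne
    · exact hne k hk

theorem frontier_iInter_of_isClosed {X ι : Type*} [TopologicalSpace X] [Finite ι]
    {C : ι → Set X} (hC : ∀ i, IsClosed (C i)) :
    frontier (⋂ i, C i) = ⋃ i, frontier (C i) ∩ ⋂ i, C i := by
  rw [(isClosed_iInter hC).frontier_eq, interior_iInter_of_finite]
  ext x
  simp only [Set.mem_sdiff, Set.mem_iUnion, Set.mem_inter_iff, Set.mem_iInter, (hC _).frontier_eq]
  grind

theorem nonempty_interior_preimage_val {X : Type*} [TopologicalSpace X] {s t : Set X} {z : X}
    (hz : z ∈ s) (h : ∀ᶠ w in 𝓝 z, w ∈ s → w ∈ t) :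
    (interior (Subtype.val ⁻¹' t : Set s)).Nonempty :=
  ⟨⟨z, hz⟩, mem_interior_iff_mem_nhds.2 <|
    mem_of_superset (continuous_subtype_val.continuousAt.preimage_mem_nhds h) fun w hw => hw w.2⟩

section HalfSpace

variable {E : Type*} [NormedAddCommGroup E] [InnerProductSpace ℝ E]

theorem isOpenMap_inner_right {a : E} (ha : a ≠ 0) : IsOpenMap fun x : E => ⟪a, x⟫ :=
  (innerSL ℝ a).isOpenMap_of_ne_zero fun h => ha <| by simpa using congr($h a)

theorem interior_setOf_inner_le {a : E} (ha : a ≠ 0) (b : ℝ) :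
    interior {x : E | ⟪a, x⟫ ≤ b} = {x | ⟪a, x⟫ < b} := by
  have h := (isOpenMap_inner_right ha).preimage_interior_eq_interior_preimage (by fun_prop)
    (Set.Iic b)
  rw [interior_Iic] at h
  exact h.symm

theorem frontier_setOf_inner_le {a : E} (ha : a ≠ 0) (b : ℝ) :
    frontier {x : E | ⟪a, x⟫ ≤ b} = {x | ⟪a, x⟫ = b} := by
  have h := (isOpenMap_inner_right ha).preimage_frontier_eq_frontier_preimage (by fun_prop)
    (Set.Iic b)
  rw [frontier_Iic] at h
  exact h.symm

theorem exists_inner_eq_forall_ne_inner_lt {ι : Type*} {a : ι → E} {b : ι → ℝ} {x₀ y : E}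
    {i : ι} (hx₀ : ∀ k, ⟪a k, x₀⟫ < b k) (hy : ∀ k ≠ i, ⟪a k, y⟫ ≤ b k) (hyi : b i < ⟪a i, y⟫) :
    ∃ z, ⟪a i, z⟫ = b i ∧ ∀ k ≠ i, ⟪a k, z⟫ < b k := by
  have hinner : ∀ (s : ℝ) k, ⟪a k, x₀ + s • (y - x₀)⟫ = (1 - s) * ⟪a k, x₀⟫ + s * ⟪a k, y⟫ :=
    fun s k => by rw [inner_add_right, inner_smul_right, inner_sub_right]; ring
  have hgap : 0 < ⟪a i, y⟫ - ⟪a i, x₀⟫ := by linarith [hx₀ i]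
  set s := (b i - ⟪a i, x₀⟫) / (⟪a i, y⟫ - ⟪a i, x₀⟫)
  have hs0 : 0 < s := div_pos (by linarith [hx₀ i]) hgap
  have hs1 : s < 1 := (div_lt_one hgap).2 (by linarith)
  refine ⟨x₀ + s • (y - x₀), ?_, fun k hk => ?_⟩
  · rw [hinner]
    have : s * (⟪a i, y⟫ - ⟪a i, x₀⟫) = b i - ⟪a i, x₀⟫ := div_mul_cancel₀ _ hgap.ne'
    linarith
  · rw [hinner]
    nlinarith [hx₀ k, hy k hk]

theorem eventually_mem_iInter_of_inner_eq {ι : Type*} [Finite ι] {a : ι → E} {b : ι → ℝ} {z : E}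
    {i : ι} (hz : ∀ k ≠ i, ⟪a k, z⟫ < b k) :
    ∀ᶠ w in 𝓝 z, ⟪a i, w⟫ = b i → w ∈ ⋂ k, {x | ⟪a k, x⟫ ≤ b k} := by
  have hlt : ∀ᶠ w in 𝓝 z, ∀ k ≠ i, ⟪a k, w⟫ < b k := eventually_all.2 fun k =>
    eventually_imp_distrib_left.2 fun hk =>
      (continuous_const.inner continuous_id).continuousAt.eventually_lt continuousAt_const (hz k hk)
  filter_upwards [hlt] with w hw hwi
  refine Set.mem_iInter.2 fun k => ?_
  rcases eq_or_ne k i with rfl | hk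
  · exact hwi.le
  · exact (hw k hk).le

theorem exists_eq_smul_of_eventually_inner_eq {a a' z : E} {b b' : ℝ} (hz : ⟪a, z⟫ = b)
    (h : ∀ᶠ w in 𝓝 z, ⟪a, w⟫ = b → ⟪a', w⟫ = b') : ∃ c : ℝ, a' = c • a ∧ b' = c * b := by
  have hz' : ⟪a', z⟫ = b' := h.self_of_nhds hz
  have hker : ∀ v, ⟪a, v⟫ = 0 → ⟪a', v⟫ = 0 := fun v hv => by
    have hline : Tendsto (fun δ : ℝ => z + δ • v) (𝓝[≠] 0) (𝓝 z) :=
      (Continuous.tendsto' (by fun_prop) 0 z (by simp)).mono_left nhdsWithin_le_nhds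
    obtain ⟨δ, hδ, hδ0⟩ := ((hline.eventually h).and self_mem_nhdsWithin).exists
    have := hδ (by rw [inner_add_right, inner_smul_right, hv, mul_zero, add_zero, hz])
    rw [inner_add_right, inner_smul_right, hz', add_eq_left] at this
    exact (mul_eq_zero.1 this).resolve_left hδ0
  have hspan : ℝ ∙ a' ≤ ℝ ∙ a := Submodule.orthogonal_le_orthogonal_iff.1 fun v hv =>
    Submodule.mem_orthogonal_singleton_iff_inner_right.2
      (hker v (Submodule.mem_orthogonal_singleton_iff_inner_right.1 hv))
  obtain ⟨c, rfl⟩ := Submodule.mem_span_singleton.1 (hspan (Submodule.mem_span_singleton_self a'))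
  exact ⟨c, rfl, by rw [← hz', inner_smul_left, hz]; simp⟩

end HalfSpace

/-- For an irredundant decomposition `A = ⋂ᵢ Cᵢ` of a polyhedron with nonempty
interior, each facet `Hᵢ ∩ A` (where `Hᵢ = ∂Cᵢ`) has nonempty interior in `Hᵢ`,
the boundary of `A` is the union of the facets, and this union is irredundant. -/
theorem facets_of_irredundant_decomposition (n t : ℕ)
    (A : Set (EuclideanSpace ℝ (Fin n))) (hint : (interior A).Nonempty)
    (C : Fin t → Set (EuclideanSpace ℝ (Fin n)))
    (hC : ∀ i, IsClosedHalfSpace (C i))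
    (hA : A = ⋂ i, C i)
    (hirr : ¬ ∃ m : ℕ, m < t ∧ ∃ D : Fin m → Set (EuclideanSpace ℝ (Fin n)),
      (∀ i, IsClosedHalfSpace (D i)) ∧ A = ⋂ i, D i) :
    (∀ i, (interior ((Subtype.val ⁻¹' A) : Set (frontier (C i)))).Nonempty) ∧
    (frontier A = ⋃ i, frontier (C i) ∩ A) ∧
    (∀ i j : Fin t, i ≠ j → ¬ (frontier (C i) ∩ A ⊆ frontier (C j) ∩ A)) := by
  subst hA
  have hout := Fin.exists_forall_ne_mem_notMem_of_not_exists_iInter_eq hC hirr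
  choose a b ha hCeq using hC
  obtain rfl : C = fun i => {x | ⟪a i, x⟫ ≤ b i} := funext hCeq
  obtain ⟨x₀, hx₀⟩ := hint
  have hx₀lt : ∀ i, ⟪a i, x₀⟫ < b i := by
    simp only [interior_iInter_of_finite, interior_setOf_inner_le (ha _), Set.mem_iInter] at hx₀
    exact hx₀
  have hfacet : ∀ i, ∃ z, ⟪a i, z⟫ = b i ∧ ∀ k ≠ i, ⟪a k, z⟫ < b k := fun i =>
    let ⟨_, hy, hyi⟩ := hout i
    exists_inner_eq_forall_ne_inner_lt hx₀lt hy (not_le.1 hyi)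
  refine ⟨fun i => ?_, frontier_iInter_of_isClosed fun i => isClosed_le (by fun_prop) (by fun_prop),
    fun i j hij hsub => ?_⟩
  · obtain ⟨z, hzi, hz⟩ := hfacet i
    rw [frontier_setOf_inner_le (ha i)]
    exact nonempty_interior_preimage_val hzi (eventually_mem_iInter_of_inner_eq hz)
  · obtain ⟨z, hzi, hz⟩ := hfacet i
    obtain ⟨y, hy, hyj⟩ := hout j
    rw [frontier_setOf_inner_le (ha i), frontier_setOf_inner_le (ha j)] at hsub
    obtain ⟨c, hc, hbc⟩ := exists_eq_smul_of_eventually_inner_eq hzi <|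
      (eventually_mem_iInter_of_inner_eq hz).mono fun w hw hwi => (hsub ⟨hwi, hw hwi⟩).1
    have hx₀j := hx₀lt j
    have hyi : ⟪a i, y⟫ ≤ b i := hy i hij
    simp only [Set.mem_ofPred_eq, not_le, hc, hbc, real_inner_smul_left] at hx₀j hyj
    -- `x₀` forces `c > 0`, and then `y ∈ C i` would give `y ∈ C j`.
    nlinarith [hx₀lt i]
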